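/- arXiv:1905.00749 — 3 statements merged into one kernel-verified Lean document; each statement's English description precedes it below -/
import Mathlib

section
/- The function p ↦ log ρ_p(A_1,…,A_N) is convex on (0,∞): for 0 < p_1 < p_2 and λ ∈ (0,1), log ρ_{λp_1+(1−λ)p_2}(A_1,…,A_N) ≤ λ log ρ_{p_1}(A_1,…,A_N) + (1−λ) log ρ_{p_2}(A_1,…,A_N). -/
open Matrix Filter

attribute [local instance] Matrix.linftyOpNormedRing

/-- The product `A_{i_n} ⋯ A_{i_1}` corresponding to a word `i : Fin n → Fin N`. -/
noncomputable def wordProd {d N n : ℕ} (A : Fin N → Matrix (Fin d) (Fin d) ℝ)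
    (i : Fin n → Fin N) : Matrix (Fin d) (Fin d) ℝ :=
  (List.ofFn fun k => A (i (Fin.rev k))).prod

/-- The statement `ρ_p(A) = r`, i.e. `(∑_{|i|=n} ‖A_i‖^p)^{1/n} → r`. -/
def IsPRadius {d N : ℕ} (A : Fin N → Matrix (Fin d) (Fin d) ℝ) (p r : ℝ) : Prop :=
  Tendsto (fun n : ℕ => (∑ i : Fin n → Fin N, ‖wordProd A i‖ ^ p) ^ ((1 : ℝ) / n))
    atTop (nhds r)

/-! Hölder's inequality with exponents `1/λ` and `1/(1-λ)`, applied to `f^{λp}` and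
`f^{(1-λ)q}`, makes `p ↦ log ∑ f^p` convex; the bound survives the `n`-th roots and the limit
defining `ρ_p`. -/

theorem Real.sum_rpow_convexComb_le {ι : Type*} (s : Finset ι) {f : ι → ℝ}
    (hf : ∀ i ∈ s, 0 ≤ f i) {p q lam : ℝ} (hp : 0 ≤ p) (hq : 0 ≤ q)
    (hlam : lam ∈ Set.Ioo (0 : ℝ) 1) :
    ∑ i ∈ s, f i ^ (lam * p + (1 - lam) * q) ≤
      (∑ i ∈ s, f i ^ p) ^ lam * (∑ i ∈ s, f i ^ q) ^ (1 - lam) := by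
  obtain ⟨hl0, hl1⟩ := hlam
  have hl1' : 0 < 1 - lam := sub_pos.mpr hl1
  have hconj : Real.HolderConjugate lam⁻¹ (1 - lam)⁻¹ :=
    ⟨by rw [inv_inv, inv_inv, inv_one]; ring, by positivity, by positivity⟩
  have holder := Real.inner_le_Lp_mul_Lq_of_nonneg s hconj
    (f := fun i => f i ^ (lam * p)) (g := fun i => f i ^ ((1 - lam) * q))
    (fun i hi => Real.rpow_nonneg (hf i hi) _) (fun i hi => Real.rpow_nonneg (hf i hi) _)
  have rpow_rpow_inv (t e : ℝ) (ht : 0 < t) (i : ι) (hi : i ∈ s) :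
      (f i ^ (t * e)) ^ t⁻¹ = f i ^ e := by
    rw [← Real.rpow_mul (hf i hi), mul_comm t, mul_assoc, mul_inv_cancel₀ ht.ne', mul_one]
  calc ∑ i ∈ s, f i ^ (lam * p + (1 - lam) * q)
      = ∑ i ∈ s, f i ^ (lam * p) * f i ^ ((1 - lam) * q) :=
        Finset.sum_congr rfl fun i hi =>
          Real.rpow_add_of_nonneg (hf i hi) (by positivity) (by positivity)
    _ ≤ (∑ i ∈ s, (f i ^ (lam * p)) ^ lam⁻¹) ^ (1 / lam⁻¹) *
          (∑ i ∈ s, (f i ^ ((1 - lam) * q)) ^ (1 - lam)⁻¹) ^ (1 / (1 - lam)⁻¹) := holder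
    _ = (∑ i ∈ s, f i ^ p) ^ lam * (∑ i ∈ s, f i ^ q) ^ (1 - lam) := by
        rw [Finset.sum_congr rfl (rpow_rpow_inv lam p hl0),
          Finset.sum_congr rfl (rpow_rpow_inv (1 - lam) q hl1'), one_div, inv_inv, one_div, inv_inv]

theorem le_rpow_mul_rpow_of_tendsto_rpow {α : Type*} {l : Filter α} [l.NeBot]
    {u v w e : α → ℝ} {a b c lam : ℝ} (hlam : lam ∈ Set.Icc (0 : ℝ) 1)
    (hu : ∀ x, 0 ≤ u x) (hv : ∀ x, 0 ≤ v x) (hw : ∀ x, 0 ≤ w x) (he : ∀ x, 0 ≤ e x)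
    (hwuv : ∀ x, w x ≤ u x ^ lam * v x ^ (1 - lam))
    (ha : Tendsto (fun x => u x ^ e x) l (nhds a)) (hb : Tendsto (fun x => v x ^ e x) l (nhds b))
    (hc : Tendsto (fun x => w x ^ e x) l (nhds c)) :
    c ≤ a ^ lam * b ^ (1 - lam) := by
  have hlim :=
    (ha.rpow_const (Or.inr hlam.1)).mul (hb.rpow_const (Or.inr (sub_nonneg.mpr hlam.2)))
  refine le_of_tendsto_of_tendsto' hc hlim fun x => ?_
  calc w x ^ e x ≤ (u x ^ lam * v x ^ (1 - lam)) ^ e x :=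
        Real.rpow_le_rpow (hw x) (hwuv x) (he x)
    _ = (u x ^ e x) ^ lam * (v x ^ e x) ^ (1 - lam) := by
        rw [Real.mul_rpow (Real.rpow_nonneg (hu x) _) (Real.rpow_nonneg (hv x) _),
          ← Real.rpow_mul (hu x), ← Real.rpow_mul (hv x), ← Real.rpow_mul (hu x),
          ← Real.rpow_mul (hv x),
          mul_comm lam, mul_comm (1 - lam)]

theorem IsPRadius.le_rpow_mul_rpow {d N : ℕ} {A : Fin N → Matrix (Fin d) (Fin d) ℝ}
    {p₁ p₂ lam r₁ r₂ r : ℝ} (hp₁ : 0 ≤ p₁) (hp₂ : 0 ≤ p₂) (hlam : lam ∈ Set.Ioo (0 : ℝ) 1)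
    (hr : IsPRadius A (lam * p₁ + (1 - lam) * p₂) r)
    (hr₁ : IsPRadius A p₁ r₁) (hr₂ : IsPRadius A p₂ r₂) :
    r ≤ r₁ ^ lam * r₂ ^ (1 - lam) := by
  set S : ℝ → ℕ → ℝ := fun p n => ∑ i : Fin n → Fin N, ‖wordProd A i‖ ^ p
  have sum_nonneg (n : ℕ) (p : ℝ) : 0 ≤ S p n :=
    Finset.sum_nonneg fun _ _ => Real.rpow_nonneg (norm_nonneg _) _
  exact le_rpow_mul_rpow_of_tendsto_rpow (u := S p₁) (v := S p₂)
    (w := S (lam * p₁ + (1 - lam) * p₂)) (e := fun n : ℕ => 1 / (n : ℝ))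
    (Set.Ioo_subset_Icc_self hlam)
    (fun n => sum_nonneg n p₁) (fun n => sum_nonneg n p₂) (fun n => sum_nonneg n _)
    (fun n => one_div_nonneg.mpr n.cast_nonneg)
    (fun _ => Real.sum_rpow_convexComb_le _ (fun _ _ => norm_nonneg _) hp₁ hp₂ hlam) hr₁ hr₂ hr

/-- `p ↦ log ρ_p(A_1,…,A_N)` is convex on `(0,∞)`. -/
theorem stmt4 {d N : ℕ} (A : Fin N → Matrix (Fin d) (Fin d) ℝ)
    (p₁ p₂ : ℝ) (hp₁ : 0 < p₁) (hp : p₁ < p₂) (lam : ℝ) (hlam : lam ∈ Set.Ioo (0:ℝ) 1)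
    (r₁ r₂ r : ℝ) (hr₁ : IsPRadius A p₁ r₁) (hr₂ : IsPRadius A p₂ r₂)
    (hr : IsPRadius A (lam * p₁ + (1 - lam) * p₂) r)
    (hq : ∀ q : ℝ, 0 ≤ q → ∀ s : ℝ, IsPRadius A q s → 0 < s) :
    Real.log r ≤ lam * Real.log r₁ + (1 - lam) * Real.log r₂ := by
  obtain ⟨hl0, hl1⟩ := hlam
  have hp₂ : 0 ≤ p₂ := (hp₁.trans hp).le
  have hr_pos : 0 < r := hq _ (by nlinarith) r hr
  have hr₁_pos : 0 < r₁ := hq p₁ hp₁.le r₁ hr₁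
  have hr₂_pos : 0 < r₂ := hq p₂ hp₂ r₂ hr₂
  calc Real.log r ≤ Real.log (r₁ ^ lam * r₂ ^ (1 - lam)) :=
        Real.log_le_log hr_pos (hr.le_rpow_mul_rpow hp₁.le hp₂ ⟨hl0, hl1⟩ hr₁ hr₂)
    _ = lam * Real.log r₁ + (1 - lam) * Real.log r₂ := by
        rw [Real.log_mul (by positivity) (by positivity), Real.log_rpow hr₁_pos,
          Real.log_rpow hr₂_pos]
end

section
/- For positive integers p and nonnegative d×d matrices A_1,…,A_N (all entries ≥ 0), one has the identity ρ_p(A_1,…,A_N) = ρ(∑_{i=1}^N A_i^{⊗p}). -/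
open Matrix Filter Kronecker

attribute [local instance] Matrix.linftyOpNormedRing

/-- Index type for the `p`-th Kronecker power of a `d × d` matrix. -/
def KIdx (d : ℕ) : ℕ → Type
  | 0 => Unit
  | p + 1 => Fin d × KIdx d p

instance KIdx.fintype (d : ℕ) : ∀ p, Fintype (KIdx d p)
  | 0 => inferInstanceAs (Fintype Unit)
  | p + 1 => @instFintypeProd _ _ _ (KIdx.fintype d p)

instance KIdx.decEq (d : ℕ) : ∀ p, DecidableEq (KIdx d p)
  | 0 => inferInstanceAs (DecidableEq Unit)
  | p + 1 => @instDecidableEqProd _ _ _ (KIdx.decEq d p)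

/-- The `p`-th Kronecker power `A^{⊗p}`. -/
noncomputable def kronPow {d : ℕ} (A : Matrix (Fin d) (Fin d) ℝ) :
    (p : ℕ) → Matrix (KIdx d p) (KIdx d p) ℝ
  | 0 => 1
  | p + 1 => A ⊗ₖ kronPow A p

/-!
The mixed-product rule turns `B ^ n`, for `B = ∑ᵢ Aᵢ^{⊗p}`, into the sum over all words `i`
of length `n` of `(A_i)^{⊗p}`, and the `ℓ∞` operator norm is multiplicative under Kronecker
products, so `‖(A_i)^{⊗p}‖ = ‖A_i‖ ^ p`. The triangle inequality gives
`‖B ^ n‖ ≤ ∑_{|i|=n} ‖A_i‖ ^ p`. Conversely all the summands are entrywise nonnegative, so no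
cancellation occurs and `∑_{|i|=n} ‖A_i‖ ^ p ≤ C ‖B ^ n‖` with `C` the number of rows of `B`;
the constant disappears after taking `n`-th roots.
-/

theorem Matrix.linfty_opNNNorm_kronecker {α m n : Type*} [NormedRing α] [NormMulClass α]
    [Fintype m] [DecidableEq m] [Fintype n] [DecidableEq n]
    (A : Matrix m m α) (B : Matrix n n α) :
    ‖A ⊗ₖ B‖₊ = ‖A‖₊ * ‖B‖₊ := by
  have row_sum (q : m × n) : ∑ j : m × n, ‖(A ⊗ₖ B) q j‖₊ =
      (∑ j, ‖A q.1 j‖₊) * ∑ t, ‖B q.2 t‖₊ := by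
    simp only [Fintype.sum_prod_type, kroneckerMap_apply, nnnorm_mul, Finset.sum_mul_sum]
  simp_rw [linfty_opNNNorm_def, row_sum, ← Finset.univ_product_univ, Finset.sup_product_left,
    NNReal.finset_sup_mul, NNReal.mul_finset_sup]

theorem Matrix.sum_norm_le_card_mul_norm_sum {ι m : Type*} [Fintype ι] [Fintype m]
    [DecidableEq m] (M : ι → Matrix m m ℝ) (hM : ∀ j a b, 0 ≤ M j a b) :
    ∑ j, ‖M j‖ ≤ Fintype.card m * ‖∑ j, M j‖ := by
  suffices ∑ j, ‖M j‖₊ ≤ Fintype.card m * ‖∑ j, M j‖₊ by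
    simpa using NNReal.coe_le_coe.mpr this
  have row_sum_add (a : m) : ∑ b, ‖(∑ j, M j) a b‖₊ = ∑ j, ∑ b, ‖M j a b‖₊ := by
    rw [Finset.sum_comm]
    refine Finset.sum_congr rfl fun b _ => NNReal.eq ?_
    simp only [Matrix.sum_apply, NNReal.coe_sum, coe_nnnorm, Real.norm_eq_abs,
      abs_of_nonneg (hM _ a b), abs_of_nonneg (Finset.sum_nonneg fun j _ => hM j a b)]
  calc ∑ j, ‖M j‖₊ ≤ ∑ j, ∑ a, ∑ b, ‖M j a b‖₊ := by
        refine Finset.sum_le_sum fun j _ => ?_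
        rw [linfty_opNNNorm_def]
        exact Finset.sup_le fun a _ =>
          Finset.single_le_sum (f := fun a => ∑ b, ‖M j a b‖₊) (fun _ _ => zero_le)
            (Finset.mem_univ a)
    _ = ∑ a, ∑ b, ‖(∑ j, M j) a b‖₊ := by
        rw [Finset.sum_comm]
        simp only [row_sum_add]
    _ ≤ ∑ _a : m, ‖∑ j, M j‖₊ := by
        refine Finset.sum_le_sum fun a _ => ?_
        rw [linfty_opNNNorm_def]
        exact Finset.le_sup (f := fun a => ∑ b, ‖(∑ j, M j) a b‖₊) (Finset.mem_univ a)
    _ = Fintype.card m * ‖∑ j, M j‖₊ := by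
        rw [Finset.sum_const, Finset.card_univ, nsmul_eq_mul]

section KroneckerPower

variable {d : ℕ}

@[simp]
theorem kronPow_zero (M : Matrix (Fin d) (Fin d) ℝ) : kronPow M 0 = 1 := rfl

theorem kronPow_one_left (p : ℕ) : kronPow (1 : Matrix (Fin d) (Fin d) ℝ) p = 1 := by
  induction p with
  | zero => rfl
  | succ p ih =>
    show (1 : Matrix (Fin d) (Fin d) ℝ) ⊗ₖ kronPow 1 p = 1
    rw [ih, one_kronecker_one]

theorem kronPow_mul (M L : Matrix (Fin d) (Fin d) ℝ) (p : ℕ) :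
    kronPow (M * L) p = kronPow M p * kronPow L p := by
  induction p with
  | zero => simp
  | succ p ih =>
    show (M * L) ⊗ₖ kronPow (M * L) p = (M ⊗ₖ kronPow M p) * (L ⊗ₖ kronPow L p)
    rw [ih, mul_kronecker_mul]

theorem nnnorm_kronPow (M : Matrix (Fin d) (Fin d) ℝ) (p : ℕ) :
    ‖kronPow M p‖₊ = ‖M‖₊ ^ p := by
  induction p with
  | zero =>
    have : Nonempty (KIdx d 0) := inferInstanceAs (Nonempty Unit)
    simp
  | succ p ih =>
    show ‖M ⊗ₖ kronPow M p‖₊ = _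
    rw [Matrix.linfty_opNNNorm_kronecker, ih, pow_succ, mul_comm]

theorem norm_kronPow (M : Matrix (Fin d) (Fin d) ℝ) (p : ℕ) : ‖kronPow M p‖ = ‖M‖ ^ p := by
  simpa using congrArg NNReal.toReal (nnnorm_kronPow M p)

theorem kronPow_nonneg {M : Matrix (Fin d) (Fin d) ℝ} (hM : ∀ a b, 0 ≤ M a b) (p : ℕ) :
    ∀ a b, 0 ≤ kronPow M p a b := by
  induction p with
  | zero => exact fun a b => by rw [kronPow_zero, one_apply]; split_ifs <;> norm_num
  | succ p ih =>
    rintro ⟨a₁, a₂⟩ ⟨b₁, b₂⟩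
    exact mul_nonneg (hM a₁ b₁) (ih a₂ b₂)

end KroneckerPower

section WordProduct

variable {d N : ℕ} (A : Fin N → Matrix (Fin d) (Fin d) ℝ)

@[simp]
theorem wordProd_zero (i : Fin 0 → Fin N) : wordProd A i = 1 := by
  simp [wordProd]

theorem wordProd_succ {n : ℕ} (i : Fin (n + 1) → Fin N) :
    wordProd A i = wordProd A (Fin.tail i) * A (i 0) := by
  simp only [wordProd, List.ofFn_succ', List.concat_eq_append, List.prod_append,
    List.prod_singleton, Fin.rev_castSucc, Fin.rev_last, Fin.tail]

variable {A} in
theorem wordProd_nonneg (hA : ∀ j a b, 0 ≤ A j a b) {n : ℕ} (i : Fin n → Fin N) :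
    ∀ a b, 0 ≤ wordProd A i a b := by
  induction n with
  | zero => exact fun a b => by rw [wordProd_zero, one_apply]; split_ifs <;> norm_num
  | succ n ih =>
    intro a b
    rw [wordProd_succ, mul_apply]
    exact Finset.sum_nonneg fun c _ => mul_nonneg (ih _ a c) (hA _ c b)

theorem sum_kronPow_pow (p n : ℕ) :
    (∑ j, kronPow (A j) p) ^ n = ∑ i : Fin n → Fin N, kronPow (wordProd A i) p := by
  induction n with
  | zero => simp [kronPow_one_left]
  | succ n ih =>
    rw [pow_succ, ih, Finset.sum_mul_sum, Finset.sum_comm, ← Fintype.sum_prod_type']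
    refine Fintype.sum_equiv (Fin.consEquiv fun _ => Fin N) _ _ fun q => ?_
    rw [← kronPow_mul, wordProd_succ]
    simp [Fin.consEquiv]

end WordProduct

theorem eq_of_tendsto_rpow_one_div_of_le_of_le_mul {a b : ℕ → ℝ} {r s C : ℝ} (hC : 0 < C)
    (hb : ∀ n, 0 ≤ b n) (hba : ∀ n, b n ≤ a n) (hab : ∀ n, a n ≤ C * b n)
    (hr : Tendsto (fun n : ℕ => a n ^ ((1 : ℝ) / n)) atTop (nhds r))
    (hs : Tendsto (fun n : ℕ => b n ^ ((1 : ℝ) / n)) atTop (nhds s)) :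
    r = s := by
  have hC_root : Tendsto (fun n : ℕ => C ^ ((1 : ℝ) / n)) atTop (nhds 1) := by
    simpa using tendsto_const_nhds.rpow tendsto_one_div_atTop_nhds_zero_nat (Or.inl hC.ne')
  have hs' : Tendsto (fun n : ℕ => C ^ ((1 : ℝ) / n) * b n ^ ((1 : ℝ) / n)) atTop (nhds s) := by
    simpa using hC_root.mul hs
  refine le_antisymm (le_of_tendsto_of_tendsto' hr hs' fun n => ?_)
    (le_of_tendsto_of_tendsto' hs hr fun n => by gcongr; exacts [hb n, hba n])
  rw [← Real.mul_rpow hC.le (hb n)]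
  exact Real.rpow_le_rpow ((hb n).trans (hba n)) (hab n) (by positivity)

theorem stmt7_general {d N : ℕ} (A : Fin N → Matrix (Fin d) (Fin d) ℝ)
    (hA : ∀ i j k, 0 ≤ A i j k)
    (p : ℕ) (r s : ℝ)
    (hr : Tendsto
      (fun n : ℕ => (∑ i : Fin n → Fin N, ‖wordProd A i‖ ^ (p : ℝ)) ^ ((1 : ℝ) / n))
      atTop (nhds r))
    (hs : Tendsto
      (fun n : ℕ => ‖(∑ i : Fin N, kronPow (A i) p) ^ n‖ ^ ((1 : ℝ) / n))
      atTop (nhds s)) :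
    r = s := by
  have word_sum_eq (n : ℕ) : ∑ i : Fin n → Fin N, ‖wordProd A i‖ ^ (p : ℝ) =
      ∑ i : Fin n → Fin N, ‖kronPow (wordProd A i) p‖ := by
    simp only [Real.rpow_natCast, norm_kronPow]
  refine eq_of_tendsto_rpow_one_div_of_le_of_le_mul (C := Fintype.card (KIdx d p) + 1)
    (by positivity) (fun n => norm_nonneg _) (fun n => ?_) (fun n => ?_) hr hs
  · rw [word_sum_eq, sum_kronPow_pow]
    exact norm_sum_le _ _
  · rw [word_sum_eq, sum_kronPow_pow]
    refine (Matrix.sum_norm_le_card_mul_norm_sum _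
      fun i => kronPow_nonneg (wordProd_nonneg hA i) p).trans ?_
    gcongr
    linarith

/-- for a positive integer `p` and nonnegative matrices,
`ρ_p(A_1,…,A_N) = ρ(∑_{i=1}^N A_i^{⊗p})`, where the spectral radius of the
matrix `B = ∑ A_i^{⊗p}` is realised as `lim_n ‖B^n‖^{1/n}`. -/
theorem stmt7 {d N : ℕ} (A : Fin N → Matrix (Fin d) (Fin d) ℝ)
    (hA : ∀ i j k, 0 ≤ A i j k)
    (p : ℕ) (hp : 1 ≤ p) (r s : ℝ)
    (hr : Tendsto
      (fun n : ℕ => (∑ i : Fin n → Fin N, ‖wordProd A i‖ ^ (p : ℝ)) ^ ((1 : ℝ) / n))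
      atTop (nhds r))
    (hs : Tendsto
      (fun n : ℕ => ‖(∑ i : Fin N, kronPow (A i) p) ^ n‖ ^ ((1 : ℝ) / n))
      atTop (nhds s)) :
    r = s :=
  stmt7_general A hA p r s hr hs
end

section
/- Suppose (s_k)_{k≥1} is a sequence of nonnegative reals with s_k ≤ C exp(−γ k^{1/(d−1)}) for constants C, γ > 0 and integer d ≥ 2. Then there exist constants C', γ' > 0 such that for every n ≥ 1, ∑_{i_1 < i_2 < ⋯ < i_n} s_{i_1} s_{i_2} ⋯ s_{i_n} ≤ C'^n exp(−γ' n^{d/(d−1)}), where the sum is over all strictly increasing n-tuples of positive integers. -/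
/-!
Split each bound as `exp (-γ i^α) = exp (-(γ/2) i^α) · exp (-(γ/2) i^α)` with `α = 1/(d-1)`.
For a strictly increasing tuple of positive integers `i_k ≥ k + 1`, so the first halves
multiply to at most `exp (-(γ/2) ∑_{k ≤ n} k^α) ≤ exp (-(γ/2) (n/2)^(1+α))`, the sum being at least
`n/2` terms of size at least `(n/2)^α`. The second halves form a summable sequence with sum `T`,
and the sum of their products over all tuples is at most `T^n`; hence `C' = C T`.
-/


open Real Finset Filter Asymptotics

lemma StrictMono.add_one_le_of_one_le {n : ℕ} {f : Fin n → ℕ} (hf : StrictMono f)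
    (hf₁ : ∀ k, 1 ≤ f k) (k : Fin n) : (k : ℕ) + 1 ≤ f k := by
  have hsub : (Iic k).image f ⊆ Icc 1 (f k) := by
    intro x hx
    obtain ⟨j, hj, rfl⟩ := mem_image.1 hx
    exact mem_Icc.2 ⟨hf₁ j, hf.monotone (mem_Iic.1 hj)⟩
  simpa [card_image_of_injective _ hf.injective] using card_le_card hsub

lemma Real.summable_exp_neg_mul_rpow {c α : ℝ} (hc : 0 < c) (hα : 0 < α) :
    Summable fun i : ℕ => exp (-c * (i : ℝ) ^ α) := by
  have hto : Tendsto (fun i : ℕ => (i : ℝ) ^ α) atTop atTop :=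
    (tendsto_rpow_atTop hα).comp tendsto_natCast_atTop_atTop
  have hO := ((isLittleO_exp_neg_mul_rpow_atTop hc (-2 / α)).comp_tendsto hto).isBigO
  refine summable_of_isBigO_nat' (Real.summable_nat_rpow.2 (by norm_num : (-2 : ℝ) < -1)) ?_
  refine hO.congr_right fun i => ?_
  simp only [Function.comp_apply]
  rw [← rpow_mul (Nat.cast_nonneg i), mul_div_cancel₀ _ hα.ne']

lemma sum_range_add_one_rpow_ge {α : ℝ} (hα : 0 ≤ α) (n : ℕ) :
    ((n : ℝ) / 2) ^ (1 + α) ≤ ∑ k ∈ range n, ((k : ℝ) + 1) ^ α := by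
  have hhalf : (n : ℝ) / 2 ≤ ((n - n / 2 : ℕ) : ℝ) := by
    have h : n ≤ 2 * (n - n / 2) := by omega
    have := (Nat.cast_le (α := ℝ)).2 h
    push_cast at this
    linarith
  have hterm : ∀ k ∈ Ico (n / 2) n, ((n : ℝ) / 2) ^ α ≤ ((k : ℝ) + 1) ^ α := by
    intro k hk
    refine rpow_le_rpow (by positivity) ?_ hα
    have hk' : n ≤ 2 * k + 2 := by have := (mem_Ico.1 hk).1; omega
    have : (n : ℝ) ≤ 2 * k + 2 := by exact_mod_cast hk'
    linarith
  calc ((n : ℝ) / 2) ^ (1 + α) = (n : ℝ) / 2 * ((n : ℝ) / 2) ^ α := by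
        rw [rpow_add' (by positivity) (by positivity), rpow_one]
    _ ≤ ((n - n / 2 : ℕ) : ℝ) * ((n : ℝ) / 2) ^ α := by gcongr
    _ = ∑ k ∈ Ico (n / 2) n, ((n : ℝ) / 2) ^ α := by rw [sum_const, Nat.card_Ico, nsmul_eq_mul]
    _ ≤ ∑ k ∈ Ico (n / 2) n, ((k : ℝ) + 1) ^ α := sum_le_sum hterm
    _ ≤ ∑ k ∈ range n, ((k : ℝ) + 1) ^ α :=
        sum_le_sum_of_subset_of_nonneg (fun k hk => mem_range.2 (mem_Ico.1 hk).2)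
          fun _ _ _ => by positivity

lemma sum_prod_le_tsum_pow {a : ℕ → ℝ} (ha : 0 ≤ a) (ha' : Summable a) {n : ℕ}
    (u : Finset (Fin n → ℕ)) : ∑ f ∈ u, ∏ k, a (f k) ≤ (∑' i, a i) ^ n := by
  classical
  set t := u.biUnion fun f => univ.image f
  have hsub : u ⊆ Fintype.piFinset fun _ => t := fun f hf =>
    Fintype.mem_piFinset.2 fun k => mem_biUnion.2 ⟨f, hf, mem_image_of_mem f (mem_univ k)⟩
  calc ∑ f ∈ u, ∏ k, a (f k) ≤ ∑ f ∈ Fintype.piFinset fun _ => t, ∏ k, a (f k) :=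
        sum_le_sum_of_subset_of_nonneg hsub fun f _ _ => prod_nonneg fun k _ => ha _
    _ = (∑ i ∈ t, a i) ^ n := by rw [← prod_univ_sum, prod_const, card_univ, Fintype.card_fin]
    _ ≤ (∑' i, a i) ^ n := by
        gcongr
        · exact sum_nonneg fun i _ => ha i
        · exact ha'.sum_le_tsum t fun i _ => ha i

lemma prod_le_of_le_mul_exp_neg_rpow {s : ℕ → ℝ} (hs : ∀ k, 0 ≤ s k) {C γ α : ℝ} (hγ : 0 ≤ γ)
    (hα : 0 ≤ α) (hbound : ∀ k : ℕ, 1 ≤ k → s k ≤ C * exp (-γ * (k : ℝ) ^ α)) {n : ℕ}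
    {f : Fin n → ℕ} (hf : StrictMono f) (hf₁ : ∀ k, 1 ≤ f k) :
    ∏ k, s (f k) ≤
      C ^ n * exp (-(γ / 2) * ((n : ℝ) / 2) ^ (1 + α)) * ∏ k, exp (-(γ / 2) * (f k : ℝ) ^ α) := by
  have hC : 0 ≤ C := nonneg_of_mul_nonneg_left ((hs 1).trans (hbound 1 le_rfl)) (exp_pos _)
  have hfactor : ∀ k : Fin n, s (f k) ≤
      C * exp (-(γ / 2) * ((k : ℕ) + 1 : ℝ) ^ α) * exp (-(γ / 2) * (f k : ℝ) ^ α) := by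
    intro k
    have hk : ((k : ℕ) + 1 : ℝ) ^ α ≤ (f k : ℝ) ^ α :=
      rpow_le_rpow (by positivity) (by exact_mod_cast hf.add_one_le_of_one_le hf₁ k) hα
    calc s (f k) ≤ C * exp (-γ * (f k : ℝ) ^ α) := hbound _ (hf₁ k)
      _ = C * (exp (-(γ / 2) * (f k : ℝ) ^ α) * exp (-(γ / 2) * (f k : ℝ) ^ α)) := by
          rw [← exp_add]; ring_nf
      _ ≤ C * (exp (-(γ / 2) * ((k : ℕ) + 1 : ℝ) ^ α) * exp (-(γ / 2) * (f k : ℝ) ^ α)) := by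
          gcongr C * (exp ?_ * _)
          nlinarith
      _ = _ := by ring
  have hsum : ((n : ℝ) / 2) ^ (1 + α) ≤ ∑ k : Fin n, ((k : ℕ) + 1 : ℝ) ^ α :=
    (sum_range_add_one_rpow_ge hα n).trans_eq (Fin.sum_univ_eq_sum_range (fun k => _) n).symm
  calc ∏ k, s (f k) ≤ ∏ k : Fin n,
        C * exp (-(γ / 2) * ((k : ℕ) + 1 : ℝ) ^ α) * exp (-(γ / 2) * (f k : ℝ) ^ α) :=
        prod_le_prod (fun k _ => hs _) fun k _ => hfactor k
    _ = C ^ n * exp (-(γ / 2) * ∑ k : Fin n, ((k : ℕ) + 1 : ℝ) ^ α) *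
          ∏ k, exp (-(γ / 2) * (f k : ℝ) ^ α) := by
        rw [prod_mul_distrib, prod_mul_distrib, prod_const, card_univ, Fintype.card_fin,
          mul_sum, exp_sum]
    _ ≤ _ := by
        gcongr _ * exp ?_ * _
        nlinarith

lemma tsum_prod_strictMono_le {s : ℕ → ℝ} (hs : ∀ k, 0 ≤ s k) {C γ α : ℝ} (hγ : 0 < γ)
    (hα : 0 < α) (hbound : ∀ k : ℕ, 1 ≤ k → s k ≤ C * exp (-γ * (k : ℝ) ^ α)) (n : ℕ) :
    ∑' i : {f : Fin n → ℕ // StrictMono f ∧ ∀ k, 1 ≤ f k}, ∏ k, s (i.1 k) ≤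
      (C * ∑' i : ℕ, exp (-(γ / 2) * (i : ℝ) ^ α)) ^ n *
        exp (-(γ / 2) * ((n : ℝ) / 2) ^ (1 + α)) := by
  have hC : 0 ≤ C := nonneg_of_mul_nonneg_left ((hs 1).trans (hbound 1 le_rfl)) (exp_pos _)
  set E := exp (-(γ / 2) * ((n : ℝ) / 2) ^ (1 + α))
  set g : ℕ → ℝ := fun i => exp (-(γ / 2) * (i : ℝ) ^ α)
  refine Real.tsum_le_of_sum_le (fun i => prod_nonneg fun k _ => hs _) fun u => ?_
  calc ∑ i ∈ u, ∏ k, s (i.1 k) ≤ ∑ i ∈ u, C ^ n * E * ∏ k, g (i.1 k) :=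
        sum_le_sum fun i _ => prod_le_of_le_mul_exp_neg_rpow hs hγ.le hα.le hbound i.2.1 i.2.2
    _ = C ^ n * E * ∑ f ∈ u.map (Function.Embedding.subtype _), ∏ k, g (f k) := by
        rw [mul_sum, sum_map]; rfl
    _ ≤ C ^ n * E * (∑' i, g i) ^ n := by
        gcongr
        exact sum_prod_le_tsum_pow (fun i => (exp_pos _).le)
          (summable_exp_neg_mul_rpow (by positivity) hα) _
    _ = _ := by ring

/-- superexponential bound on sums over strictly increasing tuples
of products of a stretched-exponentially decaying sequence. -/
theorem stmt10 (d : ℕ) (hd : 2 ≤ d) (s : ℕ → ℝ) (hs : ∀ k, 0 ≤ s k)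
    (C γ : ℝ) (hC : 0 < C) (hγ : 0 < γ)
    (hbound : ∀ k : ℕ, 1 ≤ k →
      s k ≤ C * Real.exp (-γ * (k : ℝ) ^ ((1 : ℝ) / ((d : ℝ) - 1)))) :
    ∃ C' γ' : ℝ, 0 < C' ∧ 0 < γ' ∧ ∀ n : ℕ, 1 ≤ n →
      (∑' i : {f : Fin n → ℕ // StrictMono f ∧ ∀ k, 1 ≤ f k},
          ∏ k : Fin n, s (i.1 k)) ≤
        C' ^ n * Real.exp (-γ' * (n : ℝ) ^ ((d : ℝ) / ((d : ℝ) - 1))) := by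
  set α : ℝ := 1 / ((d : ℝ) - 1)
  have hd₁ : (1 : ℝ) < d := by exact_mod_cast hd
  have hα : 0 < α := one_div_pos.2 (sub_pos.2 hd₁)
  have hexponent : (d : ℝ) / ((d : ℝ) - 1) = 1 + α := by
    rw [one_add_div (sub_pos.2 hd₁).ne', sub_add_cancel]
  have hT : 0 < ∑' i : ℕ, exp (-(γ / 2) * (i : ℝ) ^ α) :=
    (summable_exp_neg_mul_rpow (half_pos hγ) hα).tsum_pos (fun i => (exp_pos _).le) 0 (exp_pos _)
  refine ⟨C * ∑' i : ℕ, exp (-(γ / 2) * (i : ℝ) ^ α), γ / 2 / 2 ^ (1 + α), by positivity,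
    by positivity, fun n _ => ?_⟩
  refine (tsum_prod_strictMono_le hs hγ hα hbound n).trans_eq ?_
  rw [hexponent, div_rpow (Nat.cast_nonneg n) zero_le_two]
  ring_nf
end
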